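/- arXiv:1905.01597 — 3 statements merged into one kernel-verified Lean document; each statement's English description precedes it below -/
import Mathlib

section
/- For (z,y) ∈ W, the orbit G·(z,y) = {(g z gᵀ, g y hᵀ) : g ∈ GL_n(ℝ), h ∈ GL_d(ℝ)} is an open subset of W if and only if z is invertible and the d×d matrix yᵀ z⁻¹ y is invertible. -/
open Matrix

/-- The space `V` of symmetric `n × n` real matrices. -/
def SymMat (n : ℕ) := {A : Matrix (Fin n) (Fin n) ℝ // A.IsSymm}

/-- The underlying matrix of an element of `SymMat n`. -/
def SymMat.mat {n : ℕ} (z : SymMat n) : Matrix (Fin n) (Fin n) ℝ := z.1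

/-- `V` carries the (subspace) topology of a finite-dimensional real vector space. -/
instance (n : ℕ) : TopologicalSpace (SymMat n) :=
  inferInstanceAs (TopologicalSpace {A : Matrix (Fin n) (Fin n) ℝ // A.IsSymm})

/-!
Write `S(z, y) = yᵀ z⁻¹ y`. Since `det (g z gᵀ) = det g ^ 2 * det z` and
`S(g z gᵀ, g y hᵀ) = h S(z, y) hᵀ`, invertibility of `z` and of `S(z, y)` is constant on orbits.

If both hold, the derivative of the orbit map `(g, h) ↦ (g z gᵀ, g y hᵀ)` at the identity,
`(a, b) ↦ (a z + z aᵀ, a y + y bᵀ)`, is onto the tangent space `Sym_n × M_{n,d}`, so by the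
surjective form of the inverse function theorem the orbit is a neighbourhood of each of its points.

Conversely, along a line `t ↦ (z + t, y)` or `t ↦ (z, y + t (y₀ - y))`, the relevant determinant
is a polynomial in `t` that is nonzero at some point, hence nonzero at points arbitrarily close
to `t = 0`, which an open orbit contains. For the second line the columns of `y₀` are `d`
eigenvectors of `z⁻¹`, which exist because `d ≤ n`.
-/

open Filter Topology Polynomial

theorem Polynomial.frequently_eval_ne_zero {𝕜 : Type*} [NontriviallyNormedField 𝕜]
    {p : 𝕜[X]} (hp : p ≠ 0) (x : 𝕜) : ∃ᶠ t in 𝓝 x, p.eval t ≠ 0 := fun h =>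
  hp <| p.eq_zero_of_infinite_isRoot <| infinite_of_mem_nhds x <| h.mono fun _ => not_not.1

namespace Matrix

theorem sub_transpose_eq_zero_of_isSymm {n : Type*} {s : Matrix n n ℝ} (h : (s - sᵀ).IsSymm) :
    s - sᵀ = 0 := by
  ext i j
  have hij := congr_fun₂ h.eq i j
  simp only [transpose_apply, sub_apply] at hij ⊢
  simp only [zero_apply]
  linarith

variable {l m n o : Type*} [Fintype l] [Fintype m] [Fintype n] [Fintype o]

theorem frequently_det_transpose_mul_mul_ne_zero {𝕜 : Type*} [NontriviallyNormedField 𝕜]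
    [DecidableEq o] (B : Matrix m m 𝕜) (y y₀ : Matrix m o 𝕜) (h₀ : (y₀ᵀ * B * y₀).det ≠ 0) :
    ∃ᶠ t in 𝓝 (0 : 𝕜), ((y + t • (y₀ - y))ᵀ * B * (y + t • (y₀ - y))).det ≠ 0 := by
  set Y : Matrix m o 𝕜[X] := y.map C + (X : 𝕜[X]) • (y₀ - y).map C
  have hY : ∀ t, Y.map (evalRingHom t) = y + t • (y₀ - y) := fun t => by
    ext i j; simp [Y]
  have heval : ∀ t, (Yᵀ * B.map C * Y).det.eval t
      = ((y + t • (y₀ - y))ᵀ * B * (y + t • (y₀ - y))).det := fun t => by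
    have hB : (B.map C).map (evalRingHom t) = B := by ext; simp
    rw [← coe_evalRingHom, RingHom.map_det, RingHom.mapMatrix_apply, Matrix.map_mul,
      Matrix.map_mul, transpose_map, hY, hB]
  simp_rw [← heval]
  refine frequently_eval_ne_zero (fun h => h₀ ?_) 0
  simpa [heval] using congrArg (eval 1) h

theorem IsSymm.exists_isUnit_det_transpose_mul_mul [DecidableEq m] [DecidableEq n]
    {B : Matrix n n ℝ} (hB : B.IsSymm) (hdet : IsUnit B.det) (e : m ↪ n) :
    ∃ y₀ : Matrix n m ℝ, IsUnit (y₀ᵀ * B * y₀).det := by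
  have hBh : B.IsHermitian := by
    rw [IsHermitian, conjTranspose_eq_transpose_of_trivial]; exact hB
  set U : Matrix n n ℝ := (hBh.eigenvectorUnitary : Matrix n n ℝ)
  have hdiag : Uᵀ * B * U = diagonal hBh.eigenvalues := by
    simpa [Unitary.conjStarAlgAut_star_apply, star_eq_conjTranspose] using
      hBh.conjStarAlgAut_star_eigenvectorUnitary
  refine ⟨U.submatrix id e, ?_⟩
  have hsub : (U.submatrix id e)ᵀ * B * U.submatrix id e = diagonal (hBh.eigenvalues ∘ e) := by
    rw [← submatrix_diagonal_embedding, ← hdiag, submatrix_mul _ _ _ id _ Function.bijective_id,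
      submatrix_mul _ _ _ id _ Function.bijective_id, transpose_submatrix, submatrix_id_id]
  rw [hsub, det_diagonal, isUnit_iff_ne_zero, Finset.prod_ne_zero_iff]
  intro i _ hi
  refine hdet.ne_zero ?_
  rw [hBh.det_eq_prod_eigenvalues]
  exact Finset.prod_eq_zero (Finset.mem_univ (e i)) (by simpa using hi)

theorem transpose_mul_inv_mul_conj [DecidableEq n] {g : Matrix n n ℝ} (hg : IsUnit g.det)
    (z : Matrix n n ℝ) (y : Matrix n o ℝ) (h : Matrix o o ℝ) :
    (g * y * hᵀ)ᵀ * (g * z * gᵀ)⁻¹ * (g * y * hᵀ) = h * (yᵀ * z⁻¹ * y) * hᵀ := by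
  have hgt : IsUnit gᵀ.det := by rwa [det_transpose]
  simp only [mul_inv_rev, transpose_mul, transpose_transpose, Matrix.mul_assoc,
    mul_nonsing_inv_cancel_left _ _ hgt, nonsing_inv_mul_cancel_left _ _ hg]

omit [Fintype m] in
theorem IsSymm.mul_mul_transpose {K : Type*} [CommSemiring K] {z : Matrix n n K} (hz : z.IsSymm)
    (g : Matrix m n K) : (g * z * gᵀ).IsSymm := by
  simp [IsSymm, transpose_mul, hz.eq, Matrix.mul_assoc]

theorem exists_skew_mul_add_mul_transpose_eq [DecidableEq o] {K : Type*} [CommRing K]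
    {B : Matrix m m K} {y : Matrix m o K} (hS : IsUnit (yᵀ * B * y).det) (r : Matrix m o K) :
    ∃ (c : Matrix m m K) (b : Matrix o o K), cᵀ = -c ∧ c * B * y + y * bᵀ = r := by
  set q := r * (yᵀ * B * y)⁻¹
  refine ⟨q * yᵀ - y * qᵀ, (qᵀ * B * y)ᵀ, by simp [transpose_mul], ?_⟩
  have hq : q * (yᵀ * B * y) = r := nonsing_inv_mul_cancel_right _ _ hS
  rw [transpose_transpose, ← hq, Matrix.sub_mul, Matrix.sub_mul]
  simp only [Matrix.mul_assoc]
  abel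

theorem exists_mul_transpose_add_mul_add_sub_transpose_eq [DecidableEq n] [DecidableEq o]
    {z : Matrix n n ℝ} {y : Matrix n o ℝ} (hz : z.IsSymm) (hzu : IsUnit z.det)
    (hS : IsUnit (yᵀ * z⁻¹ * y).det) (ζ : Matrix n n ℝ) (η : Matrix n o ℝ) :
    ∃ (a : Matrix n n ℝ) (b : Matrix o o ℝ) (s : Matrix n n ℝ),
      z * aᵀ + a * z + (s - sᵀ) = ζ ∧ y * bᵀ + a * y = η := by
  obtain ⟨c, b, hc, hcb⟩ :=
    exists_skew_mul_add_mul_transpose_eq hS (η - (2⁻¹ : ℝ) • ζ * z⁻¹ * y)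
  -- `a z = ζ / 2 + c` with `c` skew, so `z aᵀ + a z` is the symmetric part of `ζ`
  refine ⟨((2⁻¹ : ℝ) • ζ + c) * z⁻¹, b, (2⁻¹ : ℝ) • ζ, ?_, ?_⟩
  · rw [nonsing_inv_mul_cancel_right _ _ hzu, transpose_mul, hz.inv.eq, ← Matrix.mul_assoc,
      mul_nonsing_inv _ hzu, Matrix.one_mul, transpose_add, hc, transpose_smul]
    module
  · rw [Matrix.add_mul, Matrix.add_mul, add_left_comm, add_comm (y * bᵀ), hcb, add_sub_cancel]

section Calculus

attribute [local instance] Matrix.normedAddCommGroup Matrix.normedSpace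

noncomputable def mulMulTransposeL (c : Matrix m n ℝ) :
    Matrix l m ℝ →L[ℝ] Matrix o n ℝ →L[ℝ] Matrix l o ℝ :=
  (LinearMap.mk₂ ℝ (fun a b => a * c * bᵀ) (fun _ _ _ => by simp [Matrix.add_mul])
    (fun _ _ _ => by simp) (fun _ _ _ => by simp [Matrix.mul_add])
    (fun _ _ _ => by simp)).toContinuousBilinearMap

noncomputable def transposeL : Matrix m n ℝ →L[ℝ] Matrix n m ℝ :=
  (transposeLinearEquiv m n ℝ ℝ).toContinuousLinearEquiv.toContinuousLinearMap

/-- The orbit map `(g, h) ↦ (g z gᵀ, g y hᵀ)` plus a skew-symmetric term `s - sᵀ`, which makes its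
derivative onto all of `Mat × Mat` rather than only onto `Sym × Mat`. -/
def orbitMapAddSkew (z : Matrix n n ℝ) (y : Matrix n o ℝ)
    (p : Matrix n n ℝ × Matrix o o ℝ × Matrix n n ℝ) : Matrix n n ℝ × Matrix n o ℝ :=
  (p.1 * z * p.1ᵀ + (p.2.2 - p.2.2ᵀ), p.1 * y * p.2.1ᵀ)

variable [DecidableEq n] [DecidableEq o]

theorem hasStrictFDerivAt_orbitMapAddSkew (z : Matrix n n ℝ) (y : Matrix n o ℝ) :
    ∃ L : (Matrix n n ℝ × Matrix o o ℝ × Matrix n n ℝ) →L[ℝ] Matrix n n ℝ × Matrix n o ℝ,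
      HasStrictFDerivAt (orbitMapAddSkew z y) L (1, 1, 0) ∧
      ∀ v, L v = (z * v.1ᵀ + v.1 * z + (v.2.2 - v.2.2ᵀ), y * v.2.1ᵀ + v.1 * y) := by
  set p₀ : Matrix n n ℝ × Matrix o o ℝ × Matrix n n ℝ := (1, 1, 0)
  have hg := hasStrictFDerivAt_fst (𝕜 := ℝ) (p := p₀)
  have hh := (hasStrictFDerivAt_snd (𝕜 := ℝ) (p := p₀)).fst
  have hs := (hasStrictFDerivAt_snd (𝕜 := ℝ) (p := p₀)).snd
  have hz := (mulMulTransposeL z).hasStrictFDerivAt_of_bilinear hg hg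
  have hy := (mulMulTransposeL y).hasStrictFDerivAt_of_bilinear hg hh
  have hskew := hs.sub (transposeL.hasStrictFDerivAt.comp _ hs)
  refine ⟨_, (hz.add hskew).prodMk hy, fun v => ?_⟩
  show ((1 : Matrix n n ℝ) * z * v.1ᵀ + v.1 * z * (1 : Matrix n n ℝ)ᵀ + (v.2.2 - v.2.2ᵀ),
    (1 : Matrix n n ℝ) * y * v.2.1ᵀ + v.1 * y * (1 : Matrix o o ℝ)ᵀ) = _
  simp only [Matrix.one_mul, transpose_one, Matrix.mul_one]

theorem map_orbitMapAddSkew_nhds {z : Matrix n n ℝ} {y : Matrix n o ℝ} (hz : z.IsSymm)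
    (hzu : IsUnit z.det) (hS : IsUnit (yᵀ * z⁻¹ * y).det) :
    Filter.map (orbitMapAddSkew z y)
      (𝓝 ((1, 1, 0) : Matrix n n ℝ × Matrix o o ℝ × Matrix n n ℝ)) = 𝓝 (z, y) := by
  obtain ⟨L, hL, hLv⟩ := hasStrictFDerivAt_orbitMapAddSkew z y
  have hsurj : L.range = ⊤ := LinearMap.range_eq_top.2 fun ⟨ζ, η⟩ => by
    obtain ⟨a, b, s, hζ, hη⟩ := exists_mul_transpose_add_mul_add_sub_transpose_eq hz hzu hS ζ η
    exact ⟨(a, b, s), by rw [ContinuousLinearMap.coe_coe, hLv, hζ, hη]⟩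
  have h₀ : orbitMapAddSkew z y (1, 1, 0) = (z, y) := by simp [orbitMapAddSkew]
  rw [← h₀]
  exact hL.map_nhds_eq_of_surj hsurj

end Calculus

end Matrix

namespace SymMat

variable {n d : ℕ}

def orbit (z : SymMat n) (y : Matrix (Fin n) (Fin d) ℝ) :
    Set (SymMat n × Matrix (Fin n) (Fin d) ℝ) :=
  {p | ∃ g : Matrix (Fin n) (Fin n) ℝ, ∃ h : Matrix (Fin d) (Fin d) ℝ,
    IsUnit g.det ∧ IsUnit h.det ∧ p.1.mat = g * z.mat * gᵀ ∧ p.2 = g * y * hᵀ}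

variable {z : SymMat n} {y : Matrix (Fin n) (Fin d) ℝ}

theorem mem_orbit_self (z : SymMat n) (y : Matrix (Fin n) (Fin d) ℝ) : (z, y) ∈ orbit z y :=
  ⟨1, 1, by simp, by simp, by simp, by simp⟩

theorem orbit_subset_of_mem {p : SymMat n × Matrix (Fin n) (Fin d) ℝ} (hp : p ∈ orbit z y) :
    orbit p.1 p.2 ⊆ orbit z y := by
  obtain ⟨g, h, hg, hh, hz, hy⟩ := hp
  rintro q ⟨g', h', hg', hh', hz', hy'⟩
  refine ⟨g' * g, h' * h, by simpa using hg'.mul hg, by simpa using hh'.mul hh, ?_, ?_⟩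
  · simp only [hz', hz, transpose_mul, Matrix.mul_assoc]
  · simp only [hy', hy, transpose_mul, Matrix.mul_assoc]

theorem mem_orbit_symm {p : SymMat n × Matrix (Fin n) (Fin d) ℝ} (hp : p ∈ orbit z y) :
    (z, y) ∈ orbit p.1 p.2 := by
  obtain ⟨g, h, hg, hh, hz, hy⟩ := hp
  have hgt : IsUnit gᵀ.det := by rwa [det_transpose]
  have hht : IsUnit hᵀ.det := by rwa [det_transpose]
  refine ⟨g⁻¹, h⁻¹, isUnit_nonsing_inv_det _ hg, isUnit_nonsing_inv_det _ hh, ?_, ?_⟩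
  · rw [hz, transpose_nonsing_inv]
    simp only [Matrix.mul_assoc, mul_nonsing_inv _ hgt, Matrix.mul_one,
      nonsing_inv_mul_cancel_left _ _ hg]
  · rw [hy, transpose_nonsing_inv]
    simp only [Matrix.mul_assoc, mul_nonsing_inv _ hht, Matrix.mul_one,
      nonsing_inv_mul_cancel_left _ _ hg]

theorem orbit_eq_of_mem {p : SymMat n × Matrix (Fin n) (Fin d) ℝ} (hp : p ∈ orbit z y) :
    orbit p.1 p.2 = orbit z y :=
  (orbit_subset_of_mem hp).antisymm (orbit_subset_of_mem (p := (z, y)) (mem_orbit_symm hp))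

theorem isUnit_det_iff_of_mem_orbit {p : SymMat n × Matrix (Fin n) (Fin d) ℝ}
    (hp : p ∈ orbit z y) : IsUnit p.1.mat.det ↔ IsUnit z.mat.det := by
  obtain ⟨g, h, hg, hh, hz, hy⟩ := hp
  rw [hz, det_mul, det_mul, det_transpose, IsUnit.mul_iff, IsUnit.mul_iff]
  simp only [hg, true_and, and_true]

theorem isUnit_det_transpose_mul_inv_mul_iff_of_mem_orbit
    {p : SymMat n × Matrix (Fin n) (Fin d) ℝ} (hp : p ∈ orbit z y) :
    IsUnit (p.2ᵀ * p.1.mat⁻¹ * p.2).det ↔ IsUnit (yᵀ * z.mat⁻¹ * y).det := by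
  obtain ⟨g, h, hg, hh, hz, hy⟩ := hp
  rw [hz, hy, transpose_mul_inv_mul_conj hg, det_mul, det_mul, det_transpose, IsUnit.mul_iff,
    IsUnit.mul_iff]
  simp only [hh, true_and, and_true]

theorem orbit_mem_nhds (hz : IsUnit z.mat.det) (hS : IsUnit (yᵀ * z.mat⁻¹ * y).det) :
    orbit z y ∈ 𝓝 (z, y) := by
  have hunits : ∀ᶠ p : Matrix (Fin n) (Fin n) ℝ × Matrix (Fin d) (Fin d) ℝ ×
      Matrix (Fin n) (Fin n) ℝ in 𝓝 (1, 1, 0), p.1.det ≠ 0 ∧ p.2.1.det ≠ 0 :=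
    (continuous_fst.matrix_det.continuousAt.eventually_ne (by simp)).and
      (continuous_snd.fst.matrix_det.continuousAt.eventually_ne (by simp))
  have himage := map_orbitMapAddSkew_nhds (z := z.mat) z.2 hz hS ▸ image_mem_map hunits
  have hmat : Continuous fun p : SymMat n × Matrix (Fin n) (Fin d) ℝ => (p.1.mat, p.2) :=
    (continuous_subtype_val.comp continuous_fst).prodMk continuous_snd
  filter_upwards [hmat.continuousAt.preimage_mem_nhds himage]
    with ⟨z', y'⟩ ⟨⟨g, h, s⟩, ⟨hg, hh⟩, hF⟩
  have hz' : g * z.mat * gᵀ + (s - sᵀ) = z'.mat := congrArg Prod.fst hF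
  have hskew : s - sᵀ = 0 := sub_transpose_eq_zero_of_isSymm <| by
    rw [eq_sub_of_add_eq' hz']
    exact z'.2.sub (z.2.mul_mul_transpose g)
  exact ⟨g, h, isUnit_iff_ne_zero.2 hg, isUnit_iff_ne_zero.2 hh,
    by rw [← hz', hskew, add_zero], (congrArg Prod.snd hF).symm⟩

theorem isOpen_orbit (hz : IsUnit z.mat.det) (hS : IsUnit (yᵀ * z.mat⁻¹ * y).det) :
    IsOpen (orbit z y) :=
  isOpen_iff_mem_nhds.2 fun p hp => by
    rw [← orbit_eq_of_mem hp]
    exact orbit_mem_nhds ((isUnit_det_iff_of_mem_orbit hp).2 hz)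
      ((isUnit_det_transpose_mul_inv_mul_iff_of_mem_orbit hp).2 hS)

theorem isUnit_det_of_isOpen_orbit (h : IsOpen (orbit z y)) : IsUnit z.mat.det := by
  let γ : ℝ → SymMat n × Matrix (Fin n) (Fin d) ℝ :=
    fun t => (⟨z.mat + t • 1, z.2.add (isSymm_one.smul t)⟩, y)
  have hγ : Continuous γ :=
    ((continuous_const.add (continuous_id.smul continuous_const)).subtype_mk _).prodMk
      continuous_const
  have hγ₀ : γ 0 = (z, y) := Prod.ext (Subtype.ext (by simp [γ, SymMat.mat])) rfl
  have hdet : ∃ᶠ t in 𝓝 (0 : ℝ), (z.mat + t • 1).det ≠ 0 := by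
    simpa [eval_charpoly, add_comm, smul_one_eq_diagonal] using
      frequently_eval_ne_zero (charpoly_monic (-z.mat)).ne_zero 0
  obtain ⟨t, hmem, ht⟩ :=
    (((hγ.tendsto 0).eventually (hγ₀ ▸ h.mem_nhds (mem_orbit_self z y))).and_frequently hdet).exists
  exact (isUnit_det_iff_of_mem_orbit hmem).1 (isUnit_iff_ne_zero.2 ht)

theorem isUnit_det_transpose_mul_inv_mul_of_isOpen_orbit (hdn : d ≤ n)
    (h : IsOpen (orbit z y)) (hz : IsUnit z.mat.det) : IsUnit (yᵀ * z.mat⁻¹ * y).det := by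
  obtain ⟨y₀, hy₀⟩ := z.2.inv.exists_isUnit_det_transpose_mul_mul
    (isUnit_nonsing_inv_det _ hz) (Fin.castLEEmb hdn)
  let γ : ℝ → SymMat n × Matrix (Fin n) (Fin d) ℝ := fun t => (z, y + t • (y₀ - y))
  have hγ : Continuous γ :=
    continuous_const.prodMk (continuous_const.add (continuous_id.smul continuous_const))
  have hγ₀ : γ 0 = (z, y) := by simp [γ]
  obtain ⟨t, hmem, ht⟩ :=
    (((hγ.tendsto 0).eventually (hγ₀ ▸ h.mem_nhds (mem_orbit_self z y))).and_frequently
      (frequently_det_transpose_mul_mul_ne_zero _ y y₀ hy₀.ne_zero)).exists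
  exact (isUnit_det_transpose_mul_inv_mul_iff_of_mem_orbit hmem).1 (isUnit_iff_ne_zero.2 ht)

end SymMat

theorem orbit_isOpen_iff_general (n d : ℕ) (hdn : d ≤ n)
    (z : SymMat n) (y : Matrix (Fin n) (Fin d) ℝ) :
    IsOpen {p : SymMat n × Matrix (Fin n) (Fin d) ℝ |
        ∃ g : Matrix (Fin n) (Fin n) ℝ, ∃ h : Matrix (Fin d) (Fin d) ℝ,
          IsUnit g.det ∧ IsUnit h.det ∧
            p.1.mat = g * z.mat * gᵀ ∧ p.2 = g * y * hᵀ} ↔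
      (IsUnit z.mat.det ∧ IsUnit (yᵀ * z.mat⁻¹ * y).det) := by
  change IsOpen (SymMat.orbit z y) ↔ _
  refine ⟨fun h => ?_, fun ⟨hz, hS⟩ => SymMat.isOpen_orbit hz hS⟩
  have hz := SymMat.isUnit_det_of_isOpen_orbit h
  exact ⟨hz, SymMat.isUnit_det_transpose_mul_inv_mul_of_isOpen_orbit hdn h hz⟩

/-- the orbit `G·(z,y)` of `(z,y) ∈ W = Sym_n(ℝ) × M_{n,d}(ℝ)` under
`G = GL_n(ℝ) × GL_d(ℝ)` acting by `(g,h)·(z,y) = (g z gᵀ, g y hᵀ)` is open in `W`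
if and only if `z` is invertible and `yᵀ z⁻¹ y` is invertible. -/
theorem orbit_isOpen_iff (n d : ℕ) (hd : 1 ≤ d) (hdn : d ≤ n)
    (z : SymMat n) (y : Matrix (Fin n) (Fin d) ℝ) :
    IsOpen {p : SymMat n × Matrix (Fin n) (Fin d) ℝ |
        ∃ g : Matrix (Fin n) (Fin n) ℝ, ∃ h : Matrix (Fin d) (Fin d) ℝ,
          IsUnit g.det ∧ IsUnit h.det ∧
            p.1.mat = g * z.mat * gᵀ ∧ p.2 = g * y * hᵀ} ↔
      (IsUnit z.mat.det ∧ IsUnit (yᵀ * z.mat⁻¹ * y).det) :=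
  orbit_isOpen_iff_general n d hdn z y
end

section
/- Let (z,y), (z′,y′) ∈ W be such that z, z′ are invertible and yᵀ z⁻¹ y, y′ᵀ z′⁻¹ y′ are invertible. Then there exist g ∈ GL_n(ℝ) and h ∈ GL_d(ℝ) with z′ = g z gᵀ and y′ = g y hᵀ if and only if sgn(z) = sgn(z′) and sgn(yᵀ z⁻¹ y) = sgn(y′ᵀ z′⁻¹ y′). -/
open Matrix

/-- The signature `(p, q)` of a real symmetric (Hermitian) matrix: the numbers of
positive and negative eigenvalues, counted with multiplicity.  (Junk value `(0,0)`
if the matrix is not Hermitian.) -/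
noncomputable def matSign {m : ℕ} (a : Matrix (Fin m) (Fin m) ℝ) : ℕ × ℕ :=
  if h : a.IsHermitian then
    ((Finset.univ.filter fun i => 0 < h.eigenvalues i).card,
     (Finset.univ.filter fun i => h.eigenvalues i < 0).card)
  else (0, 0)


/-!
Congruence preserves signatures (Sylvester's law of inertia): the number of positive eigenvalues
of a symmetric `a` is the largest `k` for which some `B : ℝ^{n×k}` makes `Bᵀ a B` positive definite,
which is visibly invariant under `a ↦ g a gᵀ`; the number of negative ones is that of `-a`. Since
moreover `(g y hᵀ)ᵀ (g z gᵀ)⁻¹ (g y hᵀ) = h (yᵀ z⁻¹ y) hᵀ`, both signatures are orbit invariants.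

Conversely, put `b = yᵀ z⁻¹ y`. The columns of `z⁻¹ y` together with a basis `w` of `ker yᵀ` form
a basis of `ℝⁿ` in which `(z, y)` becomes `(b ⊕ c, [b; 0])` with `c = wᵀ z w`. Signatures add over
block sums, so `sgn c = sgn z - sgn b` is determined by the two given signatures. Two symmetric
matrices with the same signature are congruent (each is congruent to the diagonal matrix of the
signs of its eigenvalues, and these agree up to a permutation), and congruences `b' = g₁ b g₁ᵀ`,
`c' = g₂ c g₂ᵀ` assemble into `(g₁ ⊕ g₂, g₁)`, which maps `(b ⊕ c, [b; 0])` to `(b' ⊕ c', [b'; 0])`.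
-/

open Finset

namespace Matrix

section Congruence

variable {R ι κ : Type*} [CommRing R] [Fintype ι] [DecidableEq ι] [Fintype κ] [DecidableEq κ]

theorem inv_mul_mul_transpose_cancel {g : Matrix ι ι R} {h : Matrix κ κ R} (hg : IsUnit g.det)
    (hh : IsUnit h.det) (x : Matrix ι κ R) : g⁻¹ * (g * x * hᵀ) * h⁻¹ᵀ = x := by
  rw [transpose_nonsing_inv, Matrix.mul_assoc, Matrix.mul_assoc,
    mul_nonsing_inv _ (by rwa [det_transpose]), Matrix.mul_one, ← Matrix.mul_assoc,
    nonsing_inv_mul _ hg, Matrix.one_mul]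

theorem diagonal_comp_equiv_eq_mul_diagonal_mul_transpose (f : ι → R) (σ : ι ≃ ι) :
    diagonal (f ∘ σ) =
      (1 : Matrix ι ι R).submatrix σ id * diagonal f * ((1 : Matrix ι ι R).submatrix σ id)ᵀ := by
  ext i j
  rcases eq_or_ne i j with rfl | h <;> simp [Matrix.mul_apply, one_apply, diagonal_apply, *]

theorem isUnit_det_one_submatrix_equiv (σ : ι ≃ ι) :
    IsUnit ((1 : Matrix ι ι R).submatrix σ id).det := by
  rw [det_permute, det_one, mul_one]
  exact (Equiv.Perm.sign σ).isUnit.map (Int.castRingHom R)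

def SameOrbit (z : Matrix ι ι R) (y : Matrix ι κ R) (z' : Matrix ι ι R) (y' : Matrix ι κ R) :
    Prop :=
  ∃ (g : Matrix ι ι R) (h : Matrix κ κ R),
    IsUnit g.det ∧ IsUnit h.det ∧ z' = g * z * gᵀ ∧ y' = g * y * hᵀ

namespace SameOrbit

variable {z₁ z₂ z₃ : Matrix ι ι R} {y₁ y₂ y₃ : Matrix ι κ R}

theorem symm (h₁₂ : SameOrbit z₁ y₁ z₂ y₂) : SameOrbit z₂ y₂ z₁ y₁ := by
  obtain ⟨g, h, hg, hh, rfl, rfl⟩ := h₁₂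
  exact ⟨g⁻¹, h⁻¹, isUnit_nonsing_inv_det g hg, isUnit_nonsing_inv_det h hh,
    (inv_mul_mul_transpose_cancel hg hg z₁).symm, (inv_mul_mul_transpose_cancel hg hh y₁).symm⟩

theorem trans (h₁₂ : SameOrbit z₁ y₁ z₂ y₂) (h₂₃ : SameOrbit z₂ y₂ z₃ y₃) :
    SameOrbit z₁ y₁ z₃ y₃ := by
  obtain ⟨g, h, hg, hh, rfl, rfl⟩ := h₁₂
  obtain ⟨g', h', hg', hh', rfl, rfl⟩ := h₂₃
  refine ⟨g' * g, h' * h, by rw [det_mul]; exact hg'.mul hg, by rw [det_mul]; exact hh'.mul hh,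
    ?_, ?_⟩ <;> simp only [transpose_mul, Matrix.mul_assoc]

theorem reindex {ι' κ' : Type*} [Fintype ι'] [DecidableEq ι'] [Fintype κ'] [DecidableEq κ']
    (e : ι ≃ ι') (f : κ ≃ κ') (h₁₂ : SameOrbit z₁ y₁ z₂ y₂) :
    SameOrbit (reindex e e z₁) (reindex e f y₁) (reindex e e z₂) (reindex e f y₂) := by
  obtain ⟨g, h, hg, hh, rfl, rfl⟩ := h₁₂
  refine ⟨Matrix.reindex e e g, Matrix.reindex f f h, by rwa [det_reindex_self],
    by rwa [det_reindex_self], ?_, ?_⟩ <;>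
    simp only [reindex_apply, transpose_submatrix, submatrix_mul_equiv]

theorem exists_transpose_mul_inv_mul_eq (h₁₂ : SameOrbit z₁ y₁ z₂ y₂) :
    ∃ h : Matrix κ κ R, IsUnit h.det ∧ y₂ᵀ * z₂⁻¹ * y₂ = h * (y₁ᵀ * z₁⁻¹ * y₁) * hᵀ := by
  obtain ⟨g, h, hg, hh, rfl, rfl⟩ := h₁₂
  refine ⟨h, hh, ?_⟩
  have hgt : gᵀ * gᵀ⁻¹ = 1 := mul_nonsing_inv _ (by rwa [det_transpose])
  rw [Matrix.mul_inv_rev, Matrix.mul_inv_rev]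
  simp only [transpose_mul, transpose_transpose, Matrix.mul_assoc]
  rw [← Matrix.mul_assoc gᵀ, hgt, Matrix.one_mul, ← Matrix.mul_assoc g⁻¹, nonsing_inv_mul _ hg,
    Matrix.one_mul]

end SameOrbit

theorem sameOrbit_fromBlocks_fromRows {μ : Type*} [Fintype μ] [DecidableEq μ]
    {b b' g₁ : Matrix κ κ R} {c c' g₂ : Matrix μ μ R} (hg₁ : IsUnit g₁.det)
    (hg₂ : IsUnit g₂.det) (hb : b' = g₁ * b * g₁ᵀ) (hc : c' = g₂ * c * g₂ᵀ) :
    SameOrbit (fromBlocks b 0 0 c) (fromRows b (0 : Matrix μ κ R))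
      (fromBlocks b' 0 0 c') (fromRows b' 0) := by
  refine ⟨fromBlocks g₁ 0 0 g₂, g₁, by rw [det_fromBlocks_zero₂₁]; exact hg₁.mul hg₂, hg₁, ?_, ?_⟩
  · simp [fromBlocks_transpose, fromBlocks_multiply, hb, hc]
  · simp [fromBlocks_mul_fromRows, hb]

end Congruence

section Inertia

variable {ι : Type*} [Fintype ι]

def HasPosDefRestriction (a : Matrix ι ι ℝ) (k : ℕ) : Prop :=
  ∃ B : Matrix ι (Fin k) ℝ, (Bᵀ * a * B).PosDef

theorem HasPosDefRestriction.of_mul_mul_transpose {a g : Matrix ι ι ℝ} {k : ℕ}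
    (h : HasPosDefRestriction (g * a * gᵀ) k) : HasPosDefRestriction a k := by
  obtain ⟨B, hB⟩ := h
  refine ⟨gᵀ * B, ?_⟩
  simpa only [transpose_mul, transpose_transpose, Matrix.mul_assoc] using hB

variable [DecidableEq ι]

theorem hasPosDefRestriction_mul_mul_transpose_iff {a g : Matrix ι ι ℝ} (hg : IsUnit g.det)
    {k : ℕ} : HasPosDefRestriction (g * a * gᵀ) k ↔ HasPosDefRestriction a k := by
  refine ⟨HasPosDefRestriction.of_mul_mul_transpose, fun h => ?_⟩
  rw [← inv_mul_mul_transpose_cancel hg hg a] at h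
  exact h.of_mul_mul_transpose

theorem hasPosDefRestriction_diagonal (lam : ι → ℝ) :
    HasPosDefRestriction (diagonal lam) #{i | 0 < lam i} := by
  let f : Fin #{i | 0 < lam i} → ι :=
    Subtype.val ∘ (Fintype.equivFinOfCardEq (Fintype.card_subtype _)).symm
  have hf : Function.Injective f := Subtype.val_injective.comp (Equiv.injective _)
  refine ⟨(1 : Matrix ι ι ℝ).submatrix id f, ?_⟩
  have hcompress : ((1 : Matrix ι ι ℝ).submatrix id f)ᵀ * diagonal lam *
      (1 : Matrix ι ι ℝ).submatrix id f = diagonal (lam ∘ f) := by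
    rw [transpose_submatrix, transpose_one, ← submatrix_diagonal _ f hf]
    ext i j
    simp [Matrix.mul_apply, Matrix.one_apply]
  rw [hcompress, posDef_diagonal_iff]
  exact fun i => ((Fintype.equivFinOfCardEq (Fintype.card_subtype _)).symm i).2

theorem HasPosDefRestriction.le_card_pos_diagonal {lam : ι → ℝ} {k : ℕ}
    (h : HasPosDefRestriction (diagonal lam) k) : k ≤ #{i | 0 < lam i} := by
  obtain ⟨B, hB⟩ := h
  let L := (LinearMap.funLeft ℝ ℝ (Subtype.val : {i // 0 < lam i} → ι)) ∘ₗ B.mulVecLin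
  have hL : Function.Injective L := by
    rw [← LinearMap.ker_eq_bot, LinearMap.ker_eq_bot']
    intro x hx
    by_contra hx0
    have hvanish : ∀ i, 0 < lam i → (B *ᵥ x) i = 0 := fun i hi => congrFun hx ⟨i, hi⟩
    have hform : x ⬝ᵥ (Bᵀ * diagonal lam * B) *ᵥ x = ∑ i, lam i * (B *ᵥ x) i ^ 2 := by
      rw [← mulVec_mulVec, ← mulVec_mulVec, dotProduct_mulVec, vecMul_transpose, dotProduct]
      exact Finset.sum_congr rfl fun i _ => by rw [mulVec_diagonal]; ring
    have hnonpos : ∑ i, lam i * (B *ᵥ x) i ^ 2 ≤ 0 := by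
      refine Finset.sum_nonpos fun i _ => ?_
      rcases lt_or_ge 0 (lam i) with hi | hi
      · simp [hvanish i hi]
      · exact mul_nonpos_of_nonpos_of_nonneg hi (sq_nonneg _)
    have hpos := hB.dotProduct_mulVec_pos hx0
    rw [star_trivial, hform] at hpos
    exact hpos.not_ge hnonpos
  calc k = Module.finrank ℝ (Fin k → ℝ) := (Module.finrank_fin_fun ℝ).symm
    _ ≤ Module.finrank ℝ ({i // 0 < lam i} → ℝ) := LinearMap.finrank_le_finrank_of_injective hL
    _ = #{i | 0 < lam i} := by rw [Module.finrank_fintype_fun_eq_card, Fintype.card_subtype]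

theorem isGreatest_hasPosDefRestriction_diagonal (lam : ι → ℝ) :
    IsGreatest {k | HasPosDefRestriction (diagonal lam) k} #{i | 0 < lam i} :=
  ⟨hasPosDefRestriction_diagonal lam, fun _ hk => hk.le_card_pos_diagonal⟩

theorem IsHermitian.exists_eq_mul_diagonal_mul_transpose {a : Matrix ι ι ℝ}
    (ha : a.IsHermitian) :
    ∃ V : Matrix ι ι ℝ, IsUnit V.det ∧ a = V * diagonal ha.eigenvalues * Vᵀ := by
  refine ⟨ha.eigenvectorUnitary, ?_, ?_⟩
  · exact isUnit_det_of_right_inverse (mem_unitaryGroup_iff.mp ha.eigenvectorUnitary.2)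
  · conv_lhs => rw [ha.spectral_theorem]
    rfl

theorem exists_diagonal_eq_mul_diagonal_sign_mul_transpose (lam : ι → ℝ) :
    ∃ S : Matrix ι ι ℝ, IsUnit S.det ∧
      diagonal lam = S * diagonal (fun i => (SignType.sign (lam i) : ℝ)) * Sᵀ := by
  -- where `lam i = 0` the sign vanishes, so any nonzero scaling works there
  let s : ι → ℝ := fun i => if lam i = 0 then 1 else √|lam i|
  refine ⟨diagonal s, ?_, ?_⟩
  · rw [det_diagonal, isUnit_iff_ne_zero, Finset.prod_ne_zero_iff]
    intro i _
    by_cases hi : lam i = 0 <;> simp [s, hi]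
  · rw [diagonal_transpose, diagonal_mul_diagonal, diagonal_mul_diagonal]
    congr 1
    funext i
    by_cases hi : lam i = 0
    · simp [hi]
    · have hsq : √|lam i| * √|lam i| = |lam i| := Real.mul_self_sqrt (abs_nonneg _)
      simp only [s, if_neg hi]
      rw [mul_right_comm, hsq, abs_mul_sign]

theorem IsHermitian.exists_eq_mul_diagonal_sign_mul_transpose {a : Matrix ι ι ℝ}
    (ha : a.IsHermitian) :
    ∃ g : Matrix ι ι ℝ, IsUnit g.det ∧
      a = g * diagonal (fun i => (SignType.sign (ha.eigenvalues i) : ℝ)) * gᵀ := by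
  obtain ⟨V, hV, hVa⟩ := ha.exists_eq_mul_diagonal_mul_transpose
  obtain ⟨S, hS, hSd⟩ := exists_diagonal_eq_mul_diagonal_sign_mul_transpose ha.eigenvalues
  refine ⟨V * S, by rw [det_mul]; exact hV.mul hS, ?_⟩
  conv_lhs => rw [hVa, hSd]
  simp only [transpose_mul, Matrix.mul_assoc]

theorem IsHermitian.transpose_mul_inv_mul {κ : Type*} [Fintype κ] {z : Matrix ι ι ℝ}
    (hz : z.IsHermitian) (y : Matrix ι κ ℝ) : (yᵀ * z⁻¹ * y).IsHermitian := by
  simpa using isHermitian_conjTranspose_mul_mul y hz.inv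

end Inertia

section Reduction

variable {K ι κ μ : Type*} [Field K] [Fintype ι]

theorem exists_mul_eq_zero_mulVec_injective {d n : ℕ} (A : Matrix (Fin d) (Fin n) K)
    (hA : Function.Surjective A.mulVec) :
    ∃ w : Matrix (Fin n) (Fin (n - d)) K, A * w = 0 ∧ Function.Injective w.mulVec := by
  have hker : Module.finrank K (LinearMap.ker A.mulVecLin) = n - d := by
    have := LinearMap.finrank_range_add_finrank_ker A.mulVecLin
    rw [LinearMap.range_eq_top.mpr hA, finrank_top, Module.finrank_fin_fun,
      Module.finrank_fin_fun] at this
    omega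
  let B := Module.finBasisOfFinrankEq K _ hker
  let w : Matrix (Fin n) (Fin (n - d)) K := Matrix.of fun i j => (B j : Fin n → K) i
  have hcol : w.col = (LinearMap.ker A.mulVecLin).subtype ∘ B := rfl
  refine ⟨w, ?_, ?_⟩
  · ext i j
    have hBj : A *ᵥ (B j : Fin n → K) = 0 := LinearMap.mem_ker.mp (B j).2
    simpa only [Matrix.mul_apply, w, of_apply, zero_apply, mulVec, dotProduct, Pi.zero_apply]
      using congrFun hBj i
  · rw [mulVec_injective_iff, hcol]
    exact B.linearIndependent.map' _ (LinearMap.ker _).ker_subtype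

theorem mulVec_injective_fromCols [Fintype κ] [Fintype μ] {u : Matrix ι κ K}
    {w : Matrix ι μ K} {A : Matrix κ ι K} (hAw : A * w = 0)
    (hAu : Function.Injective (A * u).mulVec) (hw : Function.Injective w.mulVec) :
    Function.Injective (fromCols u w).mulVec := by
  refine (injective_iff_map_eq_zero (fromCols u w).mulVecLin).mpr fun x hx => ?_
  rw [mulVecLin_apply, fromCols_mulVec] at hx
  have hinl : x ∘ Sum.inl = 0 := hAu <| by
    simpa [mulVec_add, mulVec_mulVec, hAw] using congrArg (A *ᵥ ·) hx
  have hinr : x ∘ Sum.inr = 0 := hw <| by simpa [hinl] using hx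
  ext (i | i)
  exacts [congrFun hinl i, congrFun hinr i]

variable [DecidableEq ι] {z : Matrix ι ι K} {y : Matrix ι κ K} {w : Matrix ι μ K}

theorem transpose_fromCols_inv_mul_mul_fromCols (hz : z.IsSymm) (hzu : IsUnit z.det)
    (hyw : yᵀ * w = 0) :
    (fromCols (z⁻¹ * y) w)ᵀ * z * fromCols (z⁻¹ * y) w =
      fromBlocks (yᵀ * z⁻¹ * y) 0 0 (wᵀ * z * w) := by
  have hzt : z⁻¹ᵀ = z⁻¹ := by rw [transpose_nonsing_inv, hz.eq]
  have hwy : wᵀ * y = 0 := by rw [← transpose_transpose y, ← transpose_mul, hyw, transpose_zero]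
  have hzy : z * (z⁻¹ * y) = y := by
    rw [← Matrix.mul_assoc, mul_nonsing_inv _ hzu, Matrix.one_mul]
  have hzw : z⁻¹ * (z * w) = w := by
    rw [← Matrix.mul_assoc, nonsing_inv_mul _ hzu, Matrix.one_mul]
  simp [transpose_fromCols, hzt, Matrix.mul_assoc, hzy, hzw, hyw, hwy]

theorem transpose_fromCols_inv_mul_mul (hz : z.IsSymm) (hyw : yᵀ * w = 0) :
    (fromCols (z⁻¹ * y) w)ᵀ * y = fromRows (yᵀ * z⁻¹ * y) 0 := by
  have hzt : z⁻¹ᵀ = z⁻¹ := by rw [transpose_nonsing_inv, hz.eq]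
  have hwy : wᵀ * y = 0 := by rw [← transpose_transpose y, ← transpose_mul, hyw, transpose_zero]
  simp [transpose_fromCols, hzt, hwy, Matrix.mul_assoc]

end Reduction

theorem exists_sameOrbit_reindex_fromBlocks_fromRows {K : Type*} [Field K] {n d : ℕ}
    (e : Fin d ⊕ Fin (n - d) ≃ Fin n) {z : Matrix (Fin n) (Fin n) K} (hz : z.IsSymm)
    (hzu : IsUnit z.det) {y : Matrix (Fin n) (Fin d) K} (hb : IsUnit (yᵀ * z⁻¹ * y).det) :
    ∃ c : Matrix (Fin (n - d)) (Fin (n - d)) K, c.IsSymm ∧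
      SameOrbit z y (reindex e e (fromBlocks (yᵀ * z⁻¹ * y) 0 0 c))
        (reindex e (Equiv.refl _) (fromRows (yᵀ * z⁻¹ * y) 0)) := by
  set b := yᵀ * z⁻¹ * y
  have hsurj : Function.Surjective yᵀ.mulVec := fun v =>
    ⟨(z⁻¹ * y * b⁻¹) *ᵥ v, by
      rw [mulVec_mulVec, ← Matrix.mul_assoc, ← Matrix.mul_assoc, mul_nonsing_inv _ hb,
        one_mulVec]⟩
  obtain ⟨w, hyw, hw⟩ := exists_mul_eq_zero_mulVec_injective yᵀ hsurj
  set P := fromCols (z⁻¹ * y) w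
  have hP : Function.Injective P.mulVec := by
    refine mulVec_injective_fromCols hyw ?_ hw
    rwa [← Matrix.mul_assoc, mulVec_injective_iff_isUnit, isUnit_iff_isUnit_det]
  set Q := reindex (Equiv.refl _) e P
  have hQ : IsUnit Qᵀ.det := by
    rw [det_transpose, ← isUnit_iff_isUnit_det, ← mulVec_injective_iff_isUnit]
    have hQP : Q.mulVec = P.mulVec ∘ (· ∘ e) := by
      ext v : 1
      simp [Q, submatrix_mulVec_equiv]
    rw [hQP]
    exact hP.comp e.surjective.injective_comp_right
  refine ⟨wᵀ * z * w, ?_, Qᵀ, 1, hQ, by simp, ?_, ?_⟩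
  · simp [IsSymm, Matrix.mul_assoc, hz.eq]
  · rw [transpose_transpose, ← transpose_fromCols_inv_mul_mul_fromCols hz hzu hyw, reindex_apply,
      submatrix_mul _ _ _ id _ Function.bijective_id,
      submatrix_mul _ _ _ id _ Function.bijective_id, submatrix_id_id]
    rfl
  · rw [← transpose_fromCols_inv_mul_mul hz hyw, reindex_apply,
      submatrix_mul _ _ _ id _ Function.bijective_id, transpose_one, Matrix.mul_one]
    rfl

end Matrix

theorem card_filter_sumElim_comp_symm {α β γ δ : Type*} [Fintype α] [Fintype β] [Fintype γ]
    (e : α ⊕ β ≃ γ) (f : α → δ) (g : β → δ) (P : δ → Prop) [DecidablePred P] :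
    #{i | P (Sum.elim f g (e.symm i))} = #{a | P (f a)} + #{b | P (g b)} := by
  simp only [Finset.card_filter]
  rw [e.symm.sum_comp (fun x => if P (Sum.elim f g x) then 1 else 0), Fintype.sum_sum_type]
  rfl

theorem card_sign_eq_of_card_pos_eq_of_card_neg_eq {ι : Type*} [Fintype ι] {f g : ι → ℝ}
    (hpos : #{i | 0 < f i} = #{i | 0 < g i}) (hneg : #{i | f i < 0} = #{i | g i < 0})
    (s : SignType) : #{i | SignType.sign (f i) = s} = #{i | SignType.sign (g i) = s} := by
  have hcard : ∀ h : ι → ℝ,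
      #{i | SignType.sign (h i) = 0} + #{i | h i < 0} + #{i | 0 < h i} = Fintype.card ι := by
    intro h
    have := Finset.card_eq_sum_card_fiberwise (s := univ) (t := univ)
      (f := fun i => SignType.sign (h i)) (fun _ _ => mem_univ _)
    simp only [SignType.univ_eq, Finset.card_univ] at this
    simp [this, sign_eq_one_iff, sign_eq_neg_one_iff, add_assoc]
  rcases s with _ | _ | _
  · have hf := hcard f
    have hg := hcard g
    change #{i | SignType.sign (f i) = 0} = #{i | SignType.sign (g i) = 0}
    omega
  · simpa [sign_eq_neg_one_iff] using hneg
  · simpa [sign_eq_one_iff] using hpos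

theorem exists_equiv_sign_comp_eq {ι : Type*} [Fintype ι] {f g : ι → ℝ}
    (hpos : #{i | 0 < f i} = #{i | 0 < g i}) (hneg : #{i | f i < 0} = #{i | g i < 0}) :
    ∃ σ : ι ≃ ι, ∀ i, SignType.sign (f (σ i)) = SignType.sign (g i) := by
  classical
  have hfiber : ∀ s : SignType, {i // SignType.sign (g i) = s} ≃ {i // SignType.sign (f i) = s} :=
    fun s => Fintype.equivOfCardEq <| by
      rw [Fintype.card_subtype, Fintype.card_subtype]
      exact card_sign_eq_of_card_pos_eq_of_card_neg_eq hpos.symm hneg.symm s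
  exact ⟨Equiv.ofFiberEquiv hfiber, Equiv.ofFiberEquiv_map hfiber⟩

section MatSign

variable {m : ℕ}

theorem matSign_of_isHermitian {a : Matrix (Fin m) (Fin m) ℝ} (ha : a.IsHermitian) :
    matSign a = (#{i | 0 < ha.eigenvalues i}, #{i | ha.eigenvalues i < 0}) := by
  rw [matSign, dif_pos ha]

theorem isGreatest_hasPosDefRestriction_matSign_fst {a : Matrix (Fin m) (Fin m) ℝ}
    (ha : a.IsHermitian) : IsGreatest {k | HasPosDefRestriction a k} (matSign a).1 := by
  obtain ⟨V, hV, hVa⟩ := ha.exists_eq_mul_diagonal_mul_transpose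
  rw [matSign_of_isHermitian ha]
  convert isGreatest_hasPosDefRestriction_diagonal ha.eigenvalues using 3 with k
  conv_lhs => rw [hVa]
  exact hasPosDefRestriction_mul_mul_transpose_iff hV

theorem isGreatest_hasPosDefRestriction_matSign_snd {a : Matrix (Fin m) (Fin m) ℝ}
    (ha : a.IsHermitian) : IsGreatest {k | HasPosDefRestriction (-a) k} (matSign a).2 := by
  obtain ⟨V, hV, hVa⟩ := ha.exists_eq_mul_diagonal_mul_transpose
  have hneg : -a = V * diagonal (-ha.eigenvalues) * Vᵀ := by
    conv_lhs => rw [hVa]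
    rw [Pi.neg_def, ← diagonal_neg, Matrix.mul_neg, Matrix.neg_mul]
  rw [matSign_of_isHermitian ha]
  convert isGreatest_hasPosDefRestriction_diagonal (-ha.eigenvalues) using 3 with k
  · rw [hneg, hasPosDefRestriction_mul_mul_transpose_iff hV]
  · simp

theorem matSign_mul_mul_transpose {a g : Matrix (Fin m) (Fin m) ℝ} (ha : a.IsHermitian)
    (hg : IsUnit g.det) : matSign (g * a * gᵀ) = matSign a := by
  have hga : (g * a * gᵀ).IsHermitian := by
    simpa [Matrix.mul_assoc] using isHermitian_mul_mul_conjTranspose g ha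
  have hneg : -(g * a * gᵀ) = g * -a * gᵀ := by rw [Matrix.mul_neg, Matrix.neg_mul]
  refine Prod.ext ((isGreatest_hasPosDefRestriction_matSign_fst hga).unique ?_)
    ((isGreatest_hasPosDefRestriction_matSign_snd hga).unique ?_)
  · simpa only [hasPosDefRestriction_mul_mul_transpose_iff hg]
      using isGreatest_hasPosDefRestriction_matSign_fst ha
  · simpa only [hneg, hasPosDefRestriction_mul_mul_transpose_iff hg]
      using isGreatest_hasPosDefRestriction_matSign_snd ha

theorem matSign_diagonal (lam : Fin m → ℝ) :
    matSign (diagonal lam) = (#{i | 0 < lam i}, #{i | lam i < 0}) := by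
  have hd : (diagonal lam).IsHermitian := isHermitian_diagonal lam
  have hneg := isGreatest_hasPosDefRestriction_diagonal (-lam)
  simp only [Pi.neg_def, ← diagonal_neg, neg_pos] at hneg
  exact Prod.ext ((isGreatest_hasPosDefRestriction_matSign_fst hd).unique
    (isGreatest_hasPosDefRestriction_diagonal lam))
    ((isGreatest_hasPosDefRestriction_matSign_snd hd).unique hneg)

theorem matSign_reindex_fromBlocks {p q : ℕ} (e : Fin p ⊕ Fin q ≃ Fin m)
    {b : Matrix (Fin p) (Fin p) ℝ} {c : Matrix (Fin q) (Fin q) ℝ} (hb : b.IsHermitian)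
    (hc : c.IsHermitian) :
    matSign (reindex e e (fromBlocks b 0 0 c)) = matSign b + matSign c := by
  obtain ⟨V₁, hV₁, hb'⟩ := hb.exists_eq_mul_diagonal_mul_transpose
  obtain ⟨V₂, hV₂, hc'⟩ := hc.exists_eq_mul_diagonal_mul_transpose
  let V := reindex e e (fromBlocks V₁ 0 0 V₂)
  have hV : IsUnit V.det := by
    rw [det_reindex_self, det_fromBlocks_zero₂₁]
    exact hV₁.mul hV₂
  have hdecomp : reindex e e (fromBlocks b 0 0 c) =
      V * diagonal (Sum.elim hb.eigenvalues hc.eigenvalues ∘ e.symm) * Vᵀ := by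
    conv_lhs => rw [hb', hc']
    rw [← submatrix_diagonal_equiv, ← fromBlocks_diagonal]
    simp only [V, reindex_apply, transpose_submatrix, submatrix_mul_equiv, fromBlocks_transpose,
      fromBlocks_multiply]
    simp
  rw [hdecomp, matSign_mul_mul_transpose (isHermitian_diagonal _) hV, matSign_diagonal,
    matSign_of_isHermitian hb, matSign_of_isHermitian hc, Prod.mk_add_mk]
  exact congrArg₂ Prod.mk (card_filter_sumElim_comp_symm e _ _ (0 < ·))
    (card_filter_sumElim_comp_symm e _ _ (· < (0 : ℝ)))

theorem exists_eq_mul_mul_transpose_of_matSign_eq {a a' : Matrix (Fin m) (Fin m) ℝ}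
    (ha : a.IsHermitian) (ha' : a'.IsHermitian) (h : matSign a = matSign a') :
    ∃ g : Matrix (Fin m) (Fin m) ℝ, IsUnit g.det ∧ a' = g * a * gᵀ := by
  obtain ⟨g, hg, hga⟩ := ha.exists_eq_mul_diagonal_sign_mul_transpose
  obtain ⟨g', hg', hga'⟩ := ha'.exists_eq_mul_diagonal_sign_mul_transpose
  rw [matSign_of_isHermitian ha, matSign_of_isHermitian ha', Prod.mk.injEq] at h
  obtain ⟨σ, hσ⟩ := exists_equiv_sign_comp_eq h.1 h.2
  set D := diagonal fun i => (SignType.sign (ha.eigenvalues i) : ℝ)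
  set P := (1 : Matrix (Fin m) (Fin m) ℝ).submatrix σ id
  have hdiag : diagonal (fun i => (SignType.sign (ha'.eigenvalues i) : ℝ)) = P * D * Pᵀ := by
    rw [← diagonal_comp_equiv_eq_mul_diagonal_mul_transpose]
    simp only [Function.comp_def, hσ]
  refine ⟨g' * P * g⁻¹, ?_, ?_⟩
  · rw [det_mul, det_mul]
    exact (hg'.mul (isUnit_det_one_submatrix_equiv σ)).mul (isUnit_nonsing_inv_det g hg)
  · rw [hga', hdiag, ← inv_mul_mul_transpose_cancel hg hg D, ← hga]
    simp only [transpose_mul, Matrix.mul_assoc]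

theorem Matrix.SameOrbit.matSign_eq {d : ℕ} {z z' : Matrix (Fin m) (Fin m) ℝ}
    {y y' : Matrix (Fin m) (Fin d) ℝ} (hz : z.IsHermitian) (h : SameOrbit z y z' y') :
    matSign z' = matSign z ∧ matSign (y'ᵀ * z'⁻¹ * y') = matSign (yᵀ * z⁻¹ * y) := by
  obtain ⟨k, hk, hb⟩ := h.exists_transpose_mul_inv_mul_eq
  obtain ⟨g, -, hg, -, hz', -⟩ := h
  rw [hb, hz', matSign_mul_mul_transpose hz hg,
    matSign_mul_mul_transpose (hz.transpose_mul_inv_mul y) hk]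
  exact ⟨rfl, rfl⟩

end MatSign

theorem orbit_classification_by_signatures_general (n d : ℕ) (hdn : d ≤ n)
    (z z' : SymMat n) (y y' : Matrix (Fin n) (Fin d) ℝ)
    (hz : IsUnit z.mat.det) (hz' : IsUnit z'.mat.det)
    (hy : IsUnit (yᵀ * z.mat⁻¹ * y).det) (hy' : IsUnit (y'ᵀ * z'.mat⁻¹ * y').det) :
    (∃ g : Matrix (Fin n) (Fin n) ℝ, ∃ h : Matrix (Fin d) (Fin d) ℝ,
        IsUnit g.det ∧ IsUnit h.det ∧ z'.mat = g * z.mat * gᵀ ∧ y' = g * y * hᵀ) ↔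
      (matSign z.mat = matSign z'.mat ∧
        matSign (yᵀ * z.mat⁻¹ * y) = matSign (y'ᵀ * z'.mat⁻¹ * y')) := by
  have hzH : z.mat.IsHermitian := isHermitian_iff_isSymm.mpr z.2
  have hzH' : z'.mat.IsHermitian := isHermitian_iff_isSymm.mpr z'.2
  refine ⟨fun h => ⟨(SameOrbit.matSign_eq hzH h).1.symm, (SameOrbit.matSign_eq hzH h).2.symm⟩,
    fun ⟨hsz, hsb⟩ => ?_⟩
  let e : Fin d ⊕ Fin (n - d) ≃ Fin n := finSumFinEquiv.trans (finCongr (by omega))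
  obtain ⟨c, hc, hzc⟩ := exists_sameOrbit_reindex_fromBlocks_fromRows (z := z.mat) e z.2 hz hy
  obtain ⟨c', hc', hzc'⟩ :=
    exists_sameOrbit_reindex_fromBlocks_fromRows (z := z'.mat) e z'.2 hz' hy'
  have hbH := hzH.transpose_mul_inv_mul y
  have hbH' := hzH'.transpose_mul_inv_mul y'
  have hcH : c.IsHermitian := isHermitian_iff_isSymm.mpr hc
  have hcH' : c'.IsHermitian := isHermitian_iff_isSymm.mpr hc'
  have hsc : matSign c = matSign c' := by
    refine add_left_cancel (a := matSign (yᵀ * z.mat⁻¹ * y)) ?_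
    rw [← matSign_reindex_fromBlocks e hbH hcH, (hzc.matSign_eq hzH).1, hsz,
      ← (hzc'.matSign_eq hzH').1, matSign_reindex_fromBlocks e hbH' hcH', hsb]
  obtain ⟨g₁, hg₁, hb⟩ := exists_eq_mul_mul_transpose_of_matSign_eq hbH hbH' hsb
  obtain ⟨g₂, hg₂, hc⟩ := exists_eq_mul_mul_transpose_of_matSign_eq hcH hcH' hsc
  exact hzc.trans (((sameOrbit_fromBlocks_fromRows hg₁ hg₂ hb hc).reindex e
    (Equiv.refl _)).trans hzc'.symm)

/-- two points `(z,y)`, `(z',y')` of `W = Sym_n(ℝ) × M_{n,d}(ℝ)` with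
`z, z'` invertible and `yᵀz⁻¹y`, `y'ᵀz'⁻¹y'` invertible lie in the same
`GL_n(ℝ) × GL_d(ℝ)`-orbit (for the action `(g,h)·(z,y) = (g z gᵀ, g y hᵀ)`) if and
only if `sgn z = sgn z'` and `sgn (yᵀ z⁻¹ y) = sgn (y'ᵀ z'⁻¹ y')`. -/
theorem orbit_classification_by_signatures (n d : ℕ) (hd : 1 ≤ d) (hdn : d ≤ n)
    (z z' : SymMat n) (y y' : Matrix (Fin n) (Fin d) ℝ)
    (hz : IsUnit z.mat.det) (hz' : IsUnit z'.mat.det)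
    (hy : IsUnit (yᵀ * z.mat⁻¹ * y).det) (hy' : IsUnit (y'ᵀ * z'.mat⁻¹ * y').det) :
    (∃ g : Matrix (Fin n) (Fin n) ℝ, ∃ h : Matrix (Fin d) (Fin d) ℝ,
        IsUnit g.det ∧ IsUnit h.det ∧ z'.mat = g * z.mat * gᵀ ∧ y' = g * y * hᵀ) ↔
      (matSign z.mat = matSign z'.mat ∧
        matSign (yᵀ * z.mat⁻¹ * y) = matSign (y'ᵀ * z'.mat⁻¹ * y')) :=
  orbit_classification_by_signatures_general n d hdn z z' y y' hz hz' hy hy'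
end

section
/- Let v ∈ Sym_n(ℝ) be positive definite and w ∈ Sym_n(ℝ). Then every eigenvalue μ ∈ ℂ of the complex matrix A = v + 2πi·w (a root of its characteristic polynomial) satisfies Re μ > 0; moreover A is invertible, and for every y ∈ M_{n,d}(ℝ) of rank d, every eigenvalue of the complex d×d matrix yᵀ A⁻¹ y also has strictly positive real part. -/
/-!
`A = v + 2πi·w` has Hermitian part `v`, so `Re xᴴAx = (Re x)ᵀv(Re x) + (Im x)ᵀv(Im x) > 0` for
`x ≠ 0`: `A` is strictly accretive. Testing strict accretivity on an eigenvector puts every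
eigenvalue in the open right half-plane, and on a kernel vector gives invertibility. The property
passes to `A⁻¹` (for `x = Au`, `xᴴA⁻¹x = uᴴAᴴu`) and to congruences `YᴴA⁻¹Y` by injective `Y`;
a real `y` of full column rank is such a `Y`, with `yᴴ = yᵀ`.
-/

open Matrix Complex
open scoped ComplexOrder

namespace Matrix

variable {𝕜 : Type*} [RCLike 𝕜] {m n : Type*} [Fintype n]

def IsStrictlyAccretive (M : Matrix n n 𝕜) : Prop :=
  ∀ x : n → 𝕜, x ≠ 0 → 0 < RCLike.re (star x ⬝ᵥ M *ᵥ x)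

lemma PosDef.isStrictlyAccretive {M : Matrix n n 𝕜} (hM : M.PosDef) : M.IsStrictlyAccretive :=
  fun _ hx => hM.re_dotProduct_pos hx

lemma star_dotProduct_conjTranspose_mulVec (M : Matrix n n 𝕜) (x : n → 𝕜) :
    star x ⬝ᵥ Mᴴ *ᵥ x = star (star x ⬝ᵥ M *ᵥ x) := by
  rw [star_dotProduct, star_mulVec, conjTranspose_conjTranspose, ← dotProduct_mulVec]

namespace IsStrictlyAccretive

variable {M : Matrix n n 𝕜} (hM : M.IsStrictlyAccretive)
include hM

lemma conjTranspose : Mᴴ.IsStrictlyAccretive := fun x hx => by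
  simpa [star_dotProduct_conjTranspose_mulVec, RCLike.star_def] using hM x hx

lemma mulVec_ne_zero {x : n → 𝕜} (hx : x ≠ 0) : M *ᵥ x ≠ 0 := fun h => by
  simpa [h] using hM x hx

lemma isUnit [DecidableEq n] : IsUnit M :=
  mulVec_injective_iff_isUnit.mp <| (injective_iff_map_eq_zero M.mulVecLin).mpr
    fun _ hx => not_imp_not.mp hM.mulVec_ne_zero hx

lemma re_pos_of_mem_roots_charpoly [DecidableEq n] {μ : 𝕜} (hμ : μ ∈ M.charpoly.roots) :
    0 < RCLike.re μ := by
  have hdet : (scalar n μ - M).det = 0 := by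
    rw [← eval_charpoly]; exact Polynomial.isRoot_of_mem_roots hμ
  obtain ⟨x, hx, hx_ker⟩ := exists_mulVec_eq_zero_iff.mpr hdet
  have hMx : M *ᵥ x = μ • x := by
    rw [sub_mulVec, sub_eq_zero, scalar_apply] at hx_ker
    rw [← hx_ker]; ext; simp [mulVec_diagonal]
  obtain ⟨hs_re, hs_im⟩ := RCLike.pos_iff.mp (dotProduct_star_self_pos_iff.mpr hx)
  have := hM x hx
  rw [hMx, dotProduct_smul, smul_eq_mul, RCLike.mul_re, hs_im, mul_zero, sub_zero] at this
  exact pos_of_mul_pos_left this hs_re.le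

lemma inv [DecidableEq n] : M⁻¹.IsStrictlyAccretive := by
  have hdet := (isUnit_iff_isUnit_det M).mp hM.isUnit
  intro x hx
  obtain ⟨u, rfl⟩ : ∃ u, x = M *ᵥ u := ⟨M⁻¹ *ᵥ x, by simp [mulVec_mulVec, mul_nonsing_inv _ hdet]⟩
  have hu : u ≠ 0 := by rintro rfl; simp at hx
  rw [mulVec_mulVec, nonsing_inv_mul _ hdet, one_mulVec, star_mulVec, ← dotProduct_mulVec]
  exact hM.conjTranspose u hu

lemma conjTranspose_mul_mul_same [Fintype m] {Y : Matrix n m 𝕜}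
    (hY : Function.Injective Y.mulVec) : (Yᴴ * M * Y).IsStrictlyAccretive := fun x hx => by
  have hYx : Y *ᵥ x ≠ 0 := fun h => hx <| hY.eq_iff' (mulVec_zero _) |>.1 h
  simpa only [star_mulVec, dotProduct_mulVec, vecMul_vecMul] using hM _ hYx

lemma add_smul_of_isHermitian {S : Matrix n n 𝕜} (hS : S.IsHermitian) {c : 𝕜}
    (hc : RCLike.re c = 0) : (M + c • S).IsStrictlyAccretive := fun x hx => by
  rw [add_mulVec, smul_mulVec, dotProduct_add, dotProduct_smul, smul_eq_mul, map_add,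
    RCLike.mul_re, hc, zero_mul, hS.im_star_dotProduct_mulVec_self x, mul_zero, sub_zero,
    add_zero]
  exact hM x hx

end IsStrictlyAccretive

lemma mulVec_injective_iff_rank_eq_card {K : Type*} [Field K] (A : Matrix m n K) :
    Function.Injective A.mulVec ↔ A.rank = Fintype.card n := by
  rw [mulVec_injective_iff, linearIndependent_iff_card_eq_finrank_span, rank_eq_finrank_span_cols,
    eq_comm]
  rfl

lemma mulVec_map_ofReal_injective {A : Matrix m n ℝ} (hA : Function.Injective A.mulVec) :
    Function.Injective (A.map ofReal).mulVec := by
  refine (injective_iff_map_eq_zero (A.map ofReal).mulVecLin).mpr fun z hz => ?_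
  have hre : A *ᵥ (fun j => (z j).re) = 0 := by
    ext i
    simpa [mulVec, dotProduct, Complex.re_sum] using congrArg Complex.re (congrFun hz i)
  have him : A *ᵥ (fun j => (z j).im) = 0 := by
    ext i
    simpa [mulVec, dotProduct, Complex.im_sum] using congrArg Complex.im (congrFun hz i)
  funext j
  exact Complex.ext (congrFun (hA (hre.trans (mulVec_zero A).symm)) j)
    (congrFun (hA (him.trans (mulVec_zero A).symm)) j)

lemma re_star_dotProduct_map_ofReal_mulVec (v : Matrix n n ℝ) (x : n → ℂ) :
    (star x ⬝ᵥ v.map ofReal *ᵥ x).re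
      = (fun i => (x i).re) ⬝ᵥ v *ᵥ (fun i => (x i).re)
        + (fun i => (x i).im) ⬝ᵥ v *ᵥ (fun i => (x i).im) := by
  simp only [dotProduct, mulVec, map_apply, Pi.star_apply, Finset.mul_sum, Complex.re_sum,
    ← Finset.sum_add_distrib]
  refine Finset.sum_congr rfl fun i _ => Finset.sum_congr rfl fun j _ => ?_
  simp [Complex.mul_re]

lemma PosDef.map_ofReal {v : Matrix n n ℝ} (hv : v.PosDef) : (v.map ofReal).PosDef := by
  have hH : (v.map ofReal).IsHermitian := hv.isHermitian.map _ fun _ => by simp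
  refine .of_dotProduct_mulVec_pos hH fun x hx => ?_
  refine RCLike.pos_iff.mpr ⟨?_, hH.im_star_dotProduct_mulVec_self x⟩
  rw [RCLike.re_to_complex, re_star_dotProduct_map_ofReal_mulVec]
  have hpos : ∀ u ≠ 0, 0 < u ⬝ᵥ v *ᵥ u := fun u hu => by
    simpa using hv.dotProduct_mulVec_pos hu
  have hnonneg : ∀ u, 0 ≤ u ⬝ᵥ v *ᵥ u := fun u => by
    simpa using hv.posSemidef.dotProduct_mulVec_nonneg u
  by_cases hre : (fun i => (x i).re) = 0
  · have him : (fun i => (x i).im) ≠ 0 := fun him =>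
      hx <| funext fun i => Complex.ext (congrFun hre i) (congrFun him i)
    exact add_pos_of_nonneg_of_pos (hnonneg _) (hpos _ him)
  · exact add_pos_of_pos_of_nonneg (hpos _ hre) (hnonneg _)

end Matrix

theorem eigenvalues_in_right_half_plane_general (n d : ℕ)
    (v w : Matrix (Fin n) (Fin n) ℝ) (hv : v.PosDef) (hw : w.IsSymm) :
    letI A : Matrix (Fin n) (Fin n) ℂ :=
      v.map (Complex.ofReal) + (2 * Real.pi * Complex.I) • w.map (Complex.ofReal)
    (∀ μ ∈ A.charpoly.roots, 0 < μ.re) ∧ IsUnit A ∧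
      ∀ y : Matrix (Fin n) (Fin d) ℝ, y.rank = d →
        ∀ μ ∈ ((y.map (Complex.ofReal))ᵀ * A⁻¹ * y.map (Complex.ofReal)).charpoly.roots,
          0 < μ.re := by
  set A : Matrix (Fin n) (Fin n) ℂ := v.map ofReal + (2 * Real.pi * I) • w.map ofReal
  have hw_herm : (w.map ofReal).IsHermitian :=
    (isHermitian_iff_isSymm.mpr hw).map _ fun _ => by simp
  have hA : A.IsStrictlyAccretive :=
    hv.map_ofReal.isStrictlyAccretive.add_smul_of_isHermitian hw_herm (by simp)
  refine ⟨fun μ => hA.re_pos_of_mem_roots_charpoly, hA.isUnit, fun y hy μ hμ => ?_⟩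
  have hy_inj : Function.Injective (y.map ofReal).mulVec :=
    mulVec_map_ofReal_injective <| (mulVec_injective_iff_rank_eq_card y).mpr (by simpa using hy)
  have hB := hA.inv.conjTranspose_mul_mul_same hy_inj
  rw [show (y.map ofReal)ᴴ = (y.map ofReal)ᵀ by ext; simp] at hB
  exact hB.re_pos_of_mem_roots_charpoly hμ

/-- if `v` is positive definite symmetric and `w` symmetric, then every
eigenvalue (root of the characteristic polynomial) of `A = v + 2πi·w` has strictly
positive real part; moreover `A` is invertible, and for every real `n × d` matrix `y`
of rank `d`, every eigenvalue of `yᵀ A⁻¹ y` also has strictly positive real part. -/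
theorem eigenvalues_in_right_half_plane (n d : ℕ) (hd : 1 ≤ d) (hdn : d ≤ n)
    (v w : Matrix (Fin n) (Fin n) ℝ) (hv : v.PosDef) (hw : w.IsSymm) :
    letI A : Matrix (Fin n) (Fin n) ℂ :=
      v.map (Complex.ofReal) + (2 * Real.pi * Complex.I) • w.map (Complex.ofReal)
    (∀ μ ∈ A.charpoly.roots, 0 < μ.re) ∧ IsUnit A ∧
      ∀ y : Matrix (Fin n) (Fin d) ℝ, y.rank = d →
        ∀ μ ∈ ((y.map (Complex.ofReal))ᵀ * A⁻¹ * y.map (Complex.ofReal)).charpoly.roots,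
          0 < μ.re :=
  eigenvalues_in_right_half_plane_general n d v w hv hw
end
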